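/- arXiv:1305.6903 — 4 statements merged into one kernel-verified Lean document; each statement's English description precedes it below -/
import Mathlib

section
/- Let W and V be Banach spaces, T₁ < T₂, and let 1/2 < β < β′ < 1 and α satisfy 1 − β′ < α < β. Let Z : [T₁,T₂] → W be β-Hölder continuous and let ω : [T₁,T₂] → V be β′-Hölder continuous. Then the function r ↦ ‖D^α_{T₁+}Z[r]‖ · |D^{1−α}_{T₂−}ω_{T₂−}[r]| is integrable on (T₁,T₂), and for every T > 0 there exists a constant c > 0, depending only on α, β, β′ and T, such that whenever T₂ − T₁ ≤ T one has ∫_{T₁}^{T₂} ‖D^α_{T₁+}Z[r]‖ · |D^{1−α}_{T₂−}ω_{T₂−}[r]| dr ≤ c ‖Z‖_{β,T₁,T₂} |||ω|||_{β′,T₁,T₂} (T₂ − T₁)^{β′}. (This gives the bound |∫_{T₁}^{T₂} Z dω| ≤ c ‖Z‖_β |||ω|||_{β′,T₁,T₂} (T₂−T₁)^{β′} for the pathwise integral defined through these fractional derivatives.) -/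
/-!
Hölder continuity of `Z` tames the kernel `(r - q)^(-1-α)` of `D^α_{T₁+}` to the integrable
`(r - q)^(β-α-1)`, so `‖D^α_{T₁+}Z[r]‖ ≲ ‖Z‖_β (r - T₁)^(-α)`. In the same way
`‖D^{1-α}_{T₂-}ω[r]‖ ≲ |||ω|||_{β'} (T₂ - r)^(β'+α-1)`, which is bounded by a multiple of
`(T₂ - T₁)^(β'+α-1)` because `β' + α > 1`. Integrating `(r - T₁)^(-α)` over `(T₁, T₂)` then
produces the factor `(T₂ - T₁)^(1-α)`, and the exponents add up to `β'`.

Measurability: the functions are arbitrary off `[T₁, T₂]`, so they are first replaced by their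
extensions by constants, which are continuous; the fractional derivatives then become parametric
integrals of jointly measurable integrands.
-/
open Set MeasureTheory

/-- The left-sided Weyl fractional derivative
`D^α_{T₁+}Z[r] = (1/Γ(1−α)) ( Z(r)/(r−T₁)^α + α ∫_{T₁}^r (Z(r)−Z(q))/(r−q)^{1+α} dq )`. -/
noncomputable def fracDerivLeft {W : Type*} [NormedAddCommGroup W] [NormedSpace ℝ W]
    (α T₁ : ℝ) (Z : ℝ → W) (r : ℝ) : W :=
  (1 / Real.Gamma (1 - α)) •
    (((r - T₁) ^ (-α)) • Z r +
      α • ∫ q in T₁..r, ((r - q) ^ (-(1 + α))) • (Z r - Z q))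

/-- The right-sided Weyl fractional derivative (up to the unimodular factor `(−1)^{1−α}`)
`D^{1−α}_{T₂−}ω_{T₂−}[r] = (1/Γ(α)) ( (ω(r)−ω(T₂))/(T₂−r)^{1−α}
  + (1−α) ∫_r^{T₂} (ω(r)−ω(q))/(q−r)^{2−α} dq )`. -/
noncomputable def fracDerivRight {V : Type*} [NormedAddCommGroup V] [NormedSpace ℝ V]
    (α T₂ : ℝ) (ω : ℝ → V) (r : ℝ) : V :=
  (1 / Real.Gamma α) •
    (((T₂ - r) ^ (-(1 - α))) • (ω r - ω T₂) +
      (1 - α) • ∫ q in r..T₂, ((q - r) ^ (-(2 - α))) • (ω r - ω q))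

open Filter Topology

section PowerIntegrals

variable {E : Type*} [NormedAddCommGroup E] {a b K p : ℝ}

lemma intervalIntegrable_rpow_sub_left (hp : -1 < p) :
    IntervalIntegrable (fun q => (b - q) ^ p) volume a b := by
  simpa using (intervalIntegral.intervalIntegrable_rpow' (a := b - a) (b := 0) hp).comp_sub_left b

lemma intervalIntegrable_rpow_sub_right (hp : -1 < p) :
    IntervalIntegrable (fun q => (q - a) ^ p) volume a b := by
  simpa using (intervalIntegral.intervalIntegrable_rpow' (a := 0) (b := b - a) hp).comp_sub_right a

lemma integral_rpow_sub_left (hp : 0 < p) :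
    ∫ q in a..b, (b - q) ^ (p - 1) = (b - a) ^ p / p := by
  rw [intervalIntegral.integral_comp_sub_left (· ^ (p - 1)) b,
    integral_rpow (Or.inl (by linarith)), sub_self, Real.zero_rpow (by linarith)]
  ring_nf

lemma integral_rpow_sub_right (hp : 0 < p) :
    ∫ q in a..b, (q - a) ^ (p - 1) = (b - a) ^ p / p := by
  rw [intervalIntegral.integral_comp_sub_right (· ^ (p - 1)) a,
    integral_rpow (Or.inl (by linarith)), sub_self, Real.zero_rpow (by linarith)]
  ring_nf

lemma norm_integral_le_of_norm_le_mul_rpow_sub_left [NormedSpace ℝ E] {f : ℝ → E} (hab : a ≤ b)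
    (hp : 0 < p) (hf : ∀ q ∈ Ioo a b, ‖f q‖ ≤ K * (b - q) ^ (p - 1)) :
    ‖∫ q in a..b, f q‖ ≤ K * ((b - a) ^ p / p) := by
  calc ‖∫ q in a..b, f q‖ ≤ ∫ q in a..b, K * (b - q) ^ (p - 1) :=
        intervalIntegral.norm_integral_le_of_norm_le hab
          ((Measure.ae_ne volume b).mono fun q hqb hq => hf q ⟨hq.1, hq.2.lt_of_ne hqb⟩)
          ((intervalIntegrable_rpow_sub_left (by linarith)).const_mul K)
    _ = K * ((b - a) ^ p / p) := by
        rw [intervalIntegral.integral_const_mul, integral_rpow_sub_left hp]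

lemma norm_integral_le_of_norm_le_mul_rpow_sub_right [NormedSpace ℝ E] {f : ℝ → E} (hab : a ≤ b)
    (hp : 0 < p) (hf : ∀ q ∈ Ioo a b, ‖f q‖ ≤ K * (q - a) ^ (p - 1)) :
    ‖∫ q in a..b, f q‖ ≤ K * ((b - a) ^ p / p) := by
  calc ‖∫ q in a..b, f q‖ ≤ ∫ q in a..b, K * (q - a) ^ (p - 1) :=
        intervalIntegral.norm_integral_le_of_norm_le hab
          ((Measure.ae_ne volume b).mono fun q hqb hq => hf q ⟨hq.1, hq.2.lt_of_ne hqb⟩)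
          ((intervalIntegrable_rpow_sub_right (by linarith)).const_mul K)
    _ = K * ((b - a) ^ p / p) := by
        rw [intervalIntegral.integral_const_mul, integral_rpow_sub_right hp]

lemma integrableOn_Ioo_of_norm_le_mul_rpow_sub_right {f : ℝ → E}
    (hfm : AEStronglyMeasurable f (volume.restrict (Ioo a b))) (hp : 0 < p)
    (hf : ∀ q ∈ Ioo a b, ‖f q‖ ≤ K * (q - a) ^ (p - 1)) :
    IntegrableOn f (Ioo a b) :=
  (((intervalIntegrable_rpow_sub_right (by linarith)).const_mul K).1.mono_set
    Ioo_subset_Ioc_self).mono' hfm (ae_restrict_of_forall_mem measurableSet_Ioo hf)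

lemma norm_rpow_smul_le [NormedSpace ℝ E] {x K γ s : ℝ} {v : E} (hx : 0 < x)
    (hv : ‖v‖ ≤ K * x ^ γ) :
    ‖x ^ s • v‖ ≤ K * x ^ (γ + s) := by
  rw [norm_smul, Real.norm_of_nonneg (Real.rpow_nonneg hx.le s), Real.rpow_add hx]
  calc x ^ s * ‖v‖ ≤ x ^ s * (K * x ^ γ) := by gcongr
    _ = K * (x ^ γ * x ^ s) := by ring

end PowerIntegrals

/-- `HolderOnIcc K β T₁ T₂ f` says `|||f|||_{β,T₁,T₂} ≤ K`. -/
def HolderOnIcc {E : Type*} [NormedAddCommGroup E] (K β T₁ T₂ : ℝ) (f : ℝ → E) : Prop :=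
  ∀ s t : ℝ, T₁ ≤ s → s ≤ t → t ≤ T₂ → ‖f t - f s‖ ≤ K * (t - s) ^ β

namespace HolderOnIcc

variable {E : Type*} [NormedAddCommGroup E] {K β T₁ T₂ : ℝ} {f : ℝ → E}

lemma nonneg (hf : HolderOnIcc K β T₁ T₂ f) (hT : T₁ < T₂) : 0 ≤ K :=
  nonneg_of_mul_nonneg_left ((norm_nonneg _).trans (hf T₁ T₂ le_rfl hT.le le_rfl))
    (Real.rpow_pos_of_pos (sub_pos.2 hT) β)

lemma dist_le (hf : HolderOnIcc K β T₁ T₂ f) {s t : ℝ} (hs : s ∈ Icc T₁ T₂) (ht : t ∈ Icc T₁ T₂) :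
    dist (f t) (f s) ≤ K * |t - s| ^ β := by
  rcases le_total s t with h | h
  · rw [dist_eq_norm, abs_of_nonneg (sub_nonneg.2 h)]
    exact hf s t hs.1 h ht.2
  · rw [dist_comm, dist_eq_norm, abs_of_nonpos (sub_nonpos.2 h), neg_sub]
    exact hf t s ht.1 h hs.2

lemma continuousOn (hf : HolderOnIcc K β T₁ T₂ f) (hβ : 0 < β) : ContinuousOn f (Icc T₁ T₂) := by
  intro s hs
  have hlim : Tendsto (fun t => K * |t - s| ^ β) (𝓝[Icc T₁ T₂] s) (𝓝 0) := by
    have : Continuous fun t : ℝ => K * |t - s| ^ β := by fun_prop (disch := exact hβ.le)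
    simpa [Real.zero_rpow hβ.ne'] using this.continuousWithinAt.tendsto (x := s)
  rw [ContinuousWithinAt, tendsto_iff_dist_tendsto_zero]
  exact squeeze_zero' (Eventually.of_forall fun _ => dist_nonneg)
    (eventually_mem_nhdsWithin.mono fun t ht => hf.dist_le hs ht) hlim

end HolderOnIcc

lemma MeasureTheory.StronglyMeasurable.intervalIntegral_prod_right {E : Type*}
    [NormedAddCommGroup E] [NormedSpace ℝ E] {f : ℝ × ℝ → E} (hf : StronglyMeasurable f) {a b : ℝ → ℝ}
    (ha : Measurable a) (hb : Measurable b) :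
    StronglyMeasurable fun x => ∫ y in a x..b x, f (x, y) := by
  have hIoc : ∀ {a b : ℝ → ℝ}, Measurable a → Measurable b →
      StronglyMeasurable fun x => ∫ y in Ioc (a x) (b x), f (x, y) := by
    intro a b ha hb
    have hS : MeasurableSet {p : ℝ × ℝ | a p.1 < p.2 ∧ p.2 ≤ b p.1} :=
      (_root_.measurableSet_lt (ha.comp measurable_fst) measurable_snd).inter
        (_root_.measurableSet_le measurable_snd (hb.comp measurable_fst))
    convert (hf.indicator hS).integral_prod_right' (ν := volume) using 2 with x
    rw [← integral_indicator measurableSet_Ioc]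
    rfl
  exact (hIoc ha hb).sub (hIoc hb ha)

section Measurability

variable {W : Type*} [NormedAddCommGroup W] [NormedSpace ℝ W] {α T₁ T₂ : ℝ}

lemma fracDerivLeft_congr {Z Z' : ℝ → W} {r : ℝ} (hr : T₁ ≤ r) (h : EqOn Z Z' (Icc T₁ r)) :
    fracDerivLeft α T₁ Z r = fracDerivLeft α T₁ Z' r := by
  unfold fracDerivLeft
  rw [h ⟨hr, le_rfl⟩, intervalIntegral.integral_congr fun q hq => ?_]
  rw [uIcc_of_le hr] at hq
  simp only [h hq]

lemma fracDerivRight_congr {ω ω' : ℝ → W} {r : ℝ} (hr : r ≤ T₂) (h : EqOn ω ω' (Icc r T₂)) :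
    fracDerivRight α T₂ ω r = fracDerivRight α T₂ ω' r := by
  unfold fracDerivRight
  rw [h ⟨hr, le_rfl⟩, h ⟨le_rfl, hr⟩, intervalIntegral.integral_congr fun q hq => ?_]
  rw [uIcc_of_le hr] at hq
  simp only [h hq]

lemma Continuous.stronglyMeasurable_fracDerivLeft {Z : ℝ → W} (hZ : Continuous Z) :
    StronglyMeasurable (fracDerivLeft α T₁ Z) := by
  have hker : StronglyMeasurable fun p : ℝ × ℝ => (p.1 - p.2) ^ (-(1 + α)) • (Z p.1 - Z p.2) :=
    ((measurable_fst.sub measurable_snd).pow_const _).stronglyMeasurable.smul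
      (by fun_prop : Continuous fun p : ℝ × ℝ => Z p.1 - Z p.2).stronglyMeasurable
  exact ((((measurable_id.sub_const T₁).pow_const _).stronglyMeasurable.smul
    hZ.stronglyMeasurable).add
    ((hker.intervalIntegral_prod_right measurable_const measurable_id).const_smul α)).const_smul _

lemma Continuous.stronglyMeasurable_fracDerivRight {ω : ℝ → W} (hω : Continuous ω) :
    StronglyMeasurable (fracDerivRight α T₂ ω) := by
  have hker : StronglyMeasurable fun p : ℝ × ℝ => (p.2 - p.1) ^ (-(2 - α)) • (ω p.1 - ω p.2) :=
    ((measurable_snd.sub measurable_fst).pow_const _).stronglyMeasurable.smul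
      (by fun_prop : Continuous fun p : ℝ × ℝ => ω p.1 - ω p.2).stronglyMeasurable
  exact ((((measurable_const.sub measurable_id).pow_const _).stronglyMeasurable.smul
    (hω.sub continuous_const).stronglyMeasurable).add
    ((hker.intervalIntegral_prod_right measurable_id measurable_const).const_smul _)).const_smul _

lemma ContinuousOn.aestronglyMeasurable_fracDerivLeft {Z : ℝ → W} (hT : T₁ ≤ T₂)
    (hZ : ContinuousOn Z (Icc T₁ T₂)) :
    AEStronglyMeasurable (fracDerivLeft α T₁ Z) (volume.restrict (Icc T₁ T₂)) := by
  have hZ' := (hZ.domRestrict.Icc_extend' (h := hT)).stronglyMeasurable_fracDerivLeft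
    (α := α) (T₁ := T₁)
  refine hZ'.aestronglyMeasurable.congr (ae_restrict_of_forall_mem measurableSet_Icc fun r hr => ?_)
  exact fracDerivLeft_congr hr.1 fun q hq => IccExtend_of_mem _ _ ⟨hq.1, hq.2.trans hr.2⟩

lemma ContinuousOn.aestronglyMeasurable_fracDerivRight {ω : ℝ → W} (hT : T₁ ≤ T₂)
    (hω : ContinuousOn ω (Icc T₁ T₂)) :
    AEStronglyMeasurable (fracDerivRight α T₂ ω) (volume.restrict (Icc T₁ T₂)) := by
  have hω' := (hω.domRestrict.Icc_extend' (h := hT)).stronglyMeasurable_fracDerivRight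
    (α := α) (T₂ := T₂)
  refine hω'.aestronglyMeasurable.congr (ae_restrict_of_forall_mem measurableSet_Icc fun r hr => ?_)
  exact fracDerivRight_congr hr.2 fun q hq => IccExtend_of_mem _ _ ⟨hr.1.trans hq.1, hq.2⟩

end Measurability

section Bounds

variable {W : Type*} [NormedAddCommGroup W] [NormedSpace ℝ W] {α β T₁ T₂ r : ℝ}

lemma norm_fracDerivLeft_le {Z : ℝ → W} {MZ KZ : ℝ} (hα0 : 0 < α) (hα1 : α < 1) (hαβ : α < β)
    (hM : ∀ s ∈ Icc T₁ T₂, ‖Z s‖ ≤ MZ) (hZ : HolderOnIcc KZ β T₁ T₂ Z) (hr : r ∈ Ioc T₁ T₂) :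
    ‖fracDerivLeft α T₁ Z r‖ ≤ (Real.Gamma (1 - α))⁻¹ *
      (MZ * (r - T₁) ^ (-α) + α * (KZ * ((r - T₁) ^ (β - α) / (β - α)))) := by
  have hrT : 0 < r - T₁ := sub_pos.2 hr.1
  have hZr : ‖Z r‖ ≤ MZ * (r - T₁) ^ (0 : ℝ) := by
    simpa using hM r (Ioc_subset_Icc_self hr)
  have hint : ‖∫ q in T₁..r, (r - q) ^ (-(1 + α)) • (Z r - Z q)‖ ≤
      KZ * ((r - T₁) ^ (β - α) / (β - α)) :=
    norm_integral_le_of_norm_le_mul_rpow_sub_left hr.1.le (sub_pos.2 hαβ) fun q hq =>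
      (norm_rpow_smul_le (sub_pos.2 hq.2) (hZ q r hq.1.le hq.2.le hr.2)).trans_eq (by ring_nf)
  rw [fracDerivLeft, norm_smul, one_div, norm_inv,
    Real.norm_of_nonneg (Real.Gamma_pos_of_pos (sub_pos.2 hα1)).le]
  gcongr
  refine (norm_add_le _ _).trans (add_le_add ((norm_rpow_smul_le hrT hZr).trans_eq (by simp)) ?_)
  rw [norm_smul, Real.norm_of_nonneg hα0.le]
  gcongr

lemma norm_fracDerivLeft_le_mul_rpow_neg {Z : ℝ → W} {MZ KZ T : ℝ} (hα0 : 0 < α) (hα1 : α < 1)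
    (hαβ : α < β) (hT : T₂ - T₁ ≤ T) (hM : ∀ s ∈ Icc T₁ T₂, ‖Z s‖ ≤ MZ)
    (hZ : HolderOnIcc KZ β T₁ T₂ Z) (hr : r ∈ Ioc T₁ T₂) :
    ‖fracDerivLeft α T₁ Z r‖ ≤
      (Real.Gamma (1 - α))⁻¹ * (1 + α * T ^ β / (β - α)) * (MZ + KZ) * (r - T₁) ^ (-α) := by
  have hrT : 0 < r - T₁ := sub_pos.2 hr.1
  have hrT' : r - T₁ ≤ T := by linarith [hr.2]
  have hMZ : 0 ≤ MZ := (norm_nonneg _).trans (hM r (Ioc_subset_Icc_self hr))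
  have hKZ : 0 ≤ KZ := hZ.nonneg (hr.1.trans_le hr.2)
  have hc : 0 ≤ α * T ^ β / (β - α) := by
    have := Real.rpow_nonneg (hrT.le.trans hrT') β
    positivity
  have hpow : (r - T₁) ^ (β - α) ≤ T ^ β * (r - T₁) ^ (-α) := by
    rw [show β - α = β + -α by ring, Real.rpow_add hrT]
    gcongr
    linarith
  calc ‖fracDerivLeft α T₁ Z r‖
      ≤ (Real.Gamma (1 - α))⁻¹ *
          (MZ * (r - T₁) ^ (-α) + α * (KZ * ((r - T₁) ^ (β - α) / (β - α)))) :=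
        norm_fracDerivLeft_le hα0 hα1 hαβ hM hZ hr
    _ ≤ (Real.Gamma (1 - α))⁻¹ *
          (MZ * (r - T₁) ^ (-α) + α * (KZ * (T ^ β * (r - T₁) ^ (-α) / (β - α)))) := by
        gcongr
    _ = (Real.Gamma (1 - α))⁻¹ * ((MZ + α * T ^ β / (β - α) * KZ) * (r - T₁) ^ (-α)) := by ring
    _ ≤ (Real.Gamma (1 - α))⁻¹ * ((1 + α * T ^ β / (β - α)) * (MZ + KZ) * (r - T₁) ^ (-α)) := by
        gcongr
        nlinarith [mul_nonneg hc hMZ]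
    _ = _ := by ring

lemma norm_fracDerivRight_le {ω : ℝ → W} {Kω β' : ℝ} (hα0 : 0 < α) (hα1 : α < 1)
    (hβ' : 1 < β' + α) (hω : HolderOnIcc Kω β' T₁ T₂ ω) (hr : r ∈ Ico T₁ T₂) :
    ‖fracDerivRight α T₂ ω r‖ ≤
      (Real.Gamma α)⁻¹ * (1 + (1 - α) / (β' + α - 1)) * Kω * (T₂ - r) ^ (β' + α - 1) := by
  have hrT : 0 < T₂ - r := sub_pos.2 hr.2
  have hend : ‖(T₂ - r) ^ (-(1 - α)) • (ω r - ω T₂)‖ ≤ Kω * (T₂ - r) ^ (β' + α - 1) := by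
    refine (norm_rpow_smul_le (K := Kω) (γ := β') hrT ?_).trans_eq (by ring_nf)
    simpa only [norm_sub_rev] using hω r T₂ hr.1 hr.2.le le_rfl
  have hint : ‖∫ q in r..T₂, (q - r) ^ (-(2 - α)) • (ω r - ω q)‖ ≤
      Kω * ((T₂ - r) ^ (β' + α - 1) / (β' + α - 1)) := by
    refine norm_integral_le_of_norm_le_mul_rpow_sub_right hr.2.le (by linarith) fun q hq => ?_
    refine (norm_rpow_smul_le (K := Kω) (γ := β') (sub_pos.2 hq.1) ?_).trans_eq (by ring_nf)
    simpa only [norm_sub_rev] using hω r q hr.1 hq.1.le hq.2.le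
  rw [fracDerivRight, norm_smul, one_div, norm_inv,
    Real.norm_of_nonneg (Real.Gamma_pos_of_pos hα0).le]
  calc (Real.Gamma α)⁻¹ * ‖(T₂ - r) ^ (-(1 - α)) • (ω r - ω T₂) +
        (1 - α) • ∫ q in r..T₂, (q - r) ^ (-(2 - α)) • (ω r - ω q)‖
      ≤ (Real.Gamma α)⁻¹ * (Kω * (T₂ - r) ^ (β' + α - 1) +
          (1 - α) * (Kω * ((T₂ - r) ^ (β' + α - 1) / (β' + α - 1)))) := by
        gcongr
        refine (norm_add_le _ _).trans (add_le_add hend ?_)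
        rw [norm_smul, Real.norm_of_nonneg (sub_nonneg.2 hα1.le)]
        gcongr
    _ = _ := by ring

lemma norm_fracDerivLeft_mul_norm_fracDerivRight_le {V : Type*} [NormedAddCommGroup V]
    [NormedSpace ℝ V] {Z : ℝ → W} {ω : ℝ → V} {MZ KZ Kω β' T : ℝ} (hα0 : 0 < α) (hα1 : α < 1)
    (hαβ : α < β) (hβ' : 1 < β' + α) (hT : T₂ - T₁ ≤ T) (hM : ∀ s ∈ Icc T₁ T₂, ‖Z s‖ ≤ MZ)
    (hZ : HolderOnIcc KZ β T₁ T₂ Z) (hω : HolderOnIcc Kω β' T₁ T₂ ω) (hr : r ∈ Ioo T₁ T₂) :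
    ‖fracDerivLeft α T₁ Z r‖ * ‖fracDerivRight α T₂ ω r‖ ≤
      (Real.Gamma (1 - α))⁻¹ * (1 + α * T ^ β / (β - α)) * (MZ + KZ) *
        ((Real.Gamma α)⁻¹ * (1 + (1 - α) / (β' + α - 1)) * Kω * (T₂ - T₁) ^ (β' + α - 1)) *
          (r - T₁) ^ (-α) := by
  have hL := norm_fracDerivLeft_le_mul_rpow_neg hα0 hα1 hαβ hT hM hZ (Ioo_subset_Ioc_self hr)
  have hcR : 0 ≤ (Real.Gamma α)⁻¹ * (1 + (1 - α) / (β' + α - 1)) * Kω := by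
    have := hω.nonneg (hr.1.trans hr.2)
    positivity
  have hR := (norm_fracDerivRight_le hα0 hα1 hβ' hω (Ioo_subset_Ico_self hr)).trans
    (mul_le_mul_of_nonneg_left (Real.rpow_le_rpow (sub_pos.2 hr.2).le
      (sub_le_sub_left hr.1.le T₂) (by linarith)) hcR)
  rw [mul_right_comm]
  exact mul_le_mul hL hR (norm_nonneg _) ((norm_nonneg _).trans hL)

end Bounds

theorem fracDeriv_product_integrable_and_bound_general
    {V W : Type*} [NormedAddCommGroup V] [NormedSpace ℝ V]
    [NormedAddCommGroup W] [NormedSpace ℝ W]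
    {α β β' T : ℝ} (hββ' : β < β') (hβ'1 : β' < 1)
    (hα1 : 1 - β' < α) (hα2 : α < β) (hT : 0 < T) :
    ∃ c > 0, ∀ T₁ T₂ : ℝ, T₁ < T₂ → T₂ - T₁ ≤ T →
      ∀ (Z : ℝ → W) (ω : ℝ → V) (MZ KZ Kω : ℝ),
        (∀ s ∈ Icc T₁ T₂, ‖Z s‖ ≤ MZ) →
        (∀ s t : ℝ, T₁ ≤ s → s ≤ t → t ≤ T₂ → ‖Z t - Z s‖ ≤ KZ * (t - s) ^ β) →
        (∀ s t : ℝ, T₁ ≤ s → s ≤ t → t ≤ T₂ → ‖ω t - ω s‖ ≤ Kω * (t - s) ^ β') →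
        IntegrableOn
          (fun r => ‖fracDerivLeft α T₁ Z r‖ * ‖fracDerivRight α T₂ ω r‖)
          (Ioo T₁ T₂) ∧
        (∫ r in T₁..T₂, ‖fracDerivLeft α T₁ Z r‖ * ‖fracDerivRight α T₂ ω r‖) ≤
          c * (MZ + KZ) * Kω * (T₂ - T₁) ^ β' := by
  have hα0 : 0 < α := by linarith
  have hα1' : α < 1 := by linarith
  have h1α := sub_pos.2 hα1'
  have hβ'α : 0 < β' + α - 1 := by linarith
  refine ⟨(Real.Gamma (1 - α))⁻¹ * (1 + α * T ^ β / (β - α)) *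
    ((Real.Gamma α)⁻¹ * (1 + (1 - α) / (β' + α - 1))) / (1 - α), by positivity, ?_⟩
  intro T₁ T₂ h12 hle Z ω MZ KZ Kω hM hZ hω
  have hF : ∀ r ∈ Ioo T₁ T₂, ‖‖fracDerivLeft α T₁ Z r‖ * ‖fracDerivRight α T₂ ω r‖‖ ≤
      (Real.Gamma (1 - α))⁻¹ * (1 + α * T ^ β / (β - α)) * (MZ + KZ) *
        ((Real.Gamma α)⁻¹ * (1 + (1 - α) / (β' + α - 1)) * Kω * (T₂ - T₁) ^ (β' + α - 1)) *
          (r - T₁) ^ ((1 - α) - 1) := fun r hr => by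
    rw [Real.norm_of_nonneg (by positivity), sub_sub_cancel_left]
    exact norm_fracDerivLeft_mul_norm_fracDerivRight_le hα0 hα1' hα2 (by linarith) hle hM hZ hω hr
  have hFm : AEStronglyMeasurable (fun r => ‖fracDerivLeft α T₁ Z r‖ * ‖fracDerivRight α T₂ ω r‖)
      (volume.restrict (Icc T₁ T₂)) :=
    ((HolderOnIcc.continuousOn hZ (by linarith)).aestronglyMeasurable_fracDerivLeft h12.le).norm.mul
      ((HolderOnIcc.continuousOn hω (by linarith)).aestronglyMeasurable_fracDerivRight h12.le).norm
  refine ⟨integrableOn_Ioo_of_norm_le_mul_rpow_sub_right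
    (hFm.mono_measure (Measure.restrict_mono Ioo_subset_Icc_self le_rfl)) h1α hF, ?_⟩
  refine (Real.le_norm_self _).trans <|
    (norm_integral_le_of_norm_le_mul_rpow_sub_right h12.le h1α hF).trans_eq ?_
  rw [show (T₂ - T₁) ^ β' = (T₂ - T₁) ^ (β' + α - 1) * (T₂ - T₁) ^ (1 - α) by
    rw [← Real.rpow_add (sub_pos.2 h12)]; ring_nf]
  ring

/-- If `Z` is `β`-Hölder continuous (with sup bound `MZ` and Hölder constant `KZ`) and
`ω` is `β′`-Hölder continuous (with Hölder constant `Kω`), `1/2 < β < β′ < 1` and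
`1 − β′ < α < β`, then `r ↦ ‖D^α_{T₁+}Z[r]‖·|D^{1−α}_{T₂−}ω_{T₂−}[r]|` is integrable on
`(T₁,T₂)` and, for a constant `c = c(α,β,β′,T) > 0`, whenever `T₂ − T₁ ≤ T`,
`∫_{T₁}^{T₂} ‖D^α_{T₁+}Z[r]‖·|D^{1−α}_{T₂−}ω_{T₂−}[r]| dr
  ≤ c ‖Z‖_{β} |||ω|||_{β′} (T₂−T₁)^{β′}`. -/
theorem fracDeriv_product_integrable_and_bound
    {V W : Type*} [NormedAddCommGroup V] [NormedSpace ℝ V] [CompleteSpace V]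
    [NormedAddCommGroup W] [NormedSpace ℝ W] [CompleteSpace W]
    {α β β' T : ℝ} (hβ : 1 / 2 < β) (hββ' : β < β') (hβ'1 : β' < 1)
    (hα1 : 1 - β' < α) (hα2 : α < β) (hT : 0 < T) :
    ∃ c > 0, ∀ T₁ T₂ : ℝ, T₁ < T₂ → T₂ - T₁ ≤ T →
      ∀ (Z : ℝ → W) (ω : ℝ → V) (MZ KZ Kω : ℝ),
        (∀ s ∈ Icc T₁ T₂, ‖Z s‖ ≤ MZ) →
        (∀ s t : ℝ, T₁ ≤ s → s ≤ t → t ≤ T₂ → ‖Z t - Z s‖ ≤ KZ * (t - s) ^ β) →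
        (∀ s t : ℝ, T₁ ≤ s → s ≤ t → t ≤ T₂ → ‖ω t - ω s‖ ≤ Kω * (t - s) ^ β') →
        IntegrableOn
          (fun r => ‖fracDerivLeft α T₁ Z r‖ * ‖fracDerivRight α T₂ ω r‖)
          (Ioo T₁ T₂) ∧
        (∫ r in T₁..T₂, ‖fracDerivLeft α T₁ Z r‖ * ‖fracDerivRight α T₂ ω r‖) ≤
          c * (MZ + KZ) * Kω * (T₂ - T₁) ^ β' :=
  fracDeriv_product_integrable_and_bound_general hββ' hβ'1 hα1 hα2 hT
end

section
/- Let V be a Banach space, t > 0, 0 < α < β < 1, and let p > 1 satisfy pβ < 1, p(1+α−β) < 1 and p(1+α) < 2. Let u : [0,t] → V be continuous with |u(r) − u(q)| ≤ M q^{−β}(r−q)^β for all 0 < q ≤ r ≤ t and some M ≥ 0, and let g : V → ℝ be Lipschitz continuous. For ε > 0 define ψ_ε(r) = ∫_0^{r−ε} (g(u(r)) − g(u(q)))/(r−q)^{1+α} dq if r > ε, and ψ_ε(r) = (g(u(r))/α)(ε^{−α} − r^{−α}) if 0 ≤ r ≤ ε; and define ψ₀(r) = ∫_0^r (g(u(r))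 − g(u(q)))/(r−q)^{1+α} dq for r ∈ (0,t]. Then ψ_ε converges to ψ₀ in L_p((0,t);ℝ) as ε → 0⁺, i.e. lim_{ε→0⁺} ∫_0^t |ψ_ε(r) − ψ₀(r)|^p dr = 0. -/
/-!
The weighted Hölder bound on `g ∘ u` dominates the integrand of `ψ₀ r` by
`K q^{-β} (r - q)^{β-1-α}`, whose integral over `(0, r)` is `O(r^{-α})` (split at `r/2`). Hence
`ψ₀` and `ψ_ε` are `O(r^{-α})` (for `r ≤ ε` directly from the formula, `g ∘ u` being bounded),
and the part `(0, 2ε]` of the integral is `O(ε^{1-pα})`. For `r > 2ε`,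
`ψ_ε r - ψ₀ r = -∫_{r-ε}^r`, where `q ≥ r/2`, so `|ψ_ε r - ψ₀ r| = O(ε^{β-α} r^{-β})` and the
part `(2ε, t]` is `O(ε^{p(β-α)})` because `pβ < 1`.
-/

open Set MeasureTheory

/-- The approximating function `ψ_ε` of Lemma 8:
`ψ_ε(r) = ∫_0^{r−ε} (g(u(r)) − g(u(q)))/(r−q)^{1+α} dq` for `r > ε` and
`ψ_ε(r) = (g(u(r))/α)(ε^{−α} − r^{−α})` for `0 ≤ r ≤ ε`. -/
noncomputable def psiEps {V : Type*} [NormedAddCommGroup V]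
    (α : ℝ) (g : V → ℝ) (u : ℝ → V) (ε r : ℝ) : ℝ :=
  if ε < r then ∫ q in (0:ℝ)..(r - ε), (g (u r) - g (u q)) / (r - q) ^ (1 + α)
  else (g (u r) / α) * (ε ^ (-α) - r ^ (-α))

/-- The limit function `ψ₀(r) = ∫_0^r (g(u(r)) − g(u(q)))/(r−q)^{1+α} dq`. -/
noncomputable def psiZero {V : Type*} [NormedAddCommGroup V]
    (α : ℝ) (g : V → ℝ) (u : ℝ → V) (r : ℝ) : ℝ :=
  ∫ q in (0:ℝ)..r, (g (u r) - g (u q)) / (r - q) ^ (1 + α)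

open intervalIntegral Filter Topology

section Kernel

variable {a c r : ℝ}

lemma intervalIntegrable_sub_rpow (hc : -1 < c) (r x : ℝ) :
    IntervalIntegrable (fun q => (r - q) ^ c) volume x r := by
  simpa using (intervalIntegrable_rpow' hc (a := r - x) (b := 0)).comp_sub_left r

lemma integral_sub_rpow (hc : -1 < c) (r x y : ℝ) :
    ∫ q in x..y, (r - q) ^ c = ((r - x) ^ (c + 1) - (r - y) ^ (c + 1)) / (c + 1) := by
  rw [integral_comp_sub_left (fun q => q ^ c), integral_rpow (Or.inl hc)]

lemma half_rpow_neg (hr : 0 ≤ r) (s : ℝ) : (r / 2) ^ (-s) = 2 ^ s * r ^ (-s) := by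
  rw [Real.div_rpow hr zero_le_two, Real.rpow_neg zero_le_two, div_inv_eq_mul, mul_comm]

lemma intervalIntegrable_rpow_mul_sub_rpow (ha : a < 1) (hc : -1 < c) {x y : ℝ}
    (hx : 0 ≤ x) (hxy : x ≤ y) (hyr : y ≤ r) :
    IntervalIntegrable (fun q => q ^ (-a) * (r - q) ^ c) volume x y := by
  rcases hxy.eq_or_lt with rfl | hxy
  · exact .refl
  have hr : 0 < r := by linarith
  have head : IntervalIntegrable (fun q => q ^ (-a) * (r - q) ^ c) volume 0 (r / 2) := by
    refine (intervalIntegrable_rpow' (by linarith)).mul_continuousOn ?_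
    refine (continuous_const.sub continuous_id).continuousOn.rpow_const fun q hq => Or.inl ?_
    rw [uIcc_of_le (by linarith)] at hq
    exact (by linarith [hq.2] : r - q ≠ 0)
  have tail : IntervalIntegrable (fun q => q ^ (-a) * (r - q) ^ c) volume (r / 2) r := by
    refine (intervalIntegrable_sub_rpow hc r (r / 2)).continuousOn_mul ?_
    refine continuousOn_id.rpow_const fun q hq => Or.inl ?_
    rw [uIcc_of_le (by linarith)] at hq
    exact (by linarith [hq.1] : q ≠ 0)
  refine (head.trans tail).mono_set ?_
  rw [uIcc_of_le hr.le, uIcc_of_le hxy.le]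
  exact Icc_subset_Icc hx hyr

lemma integral_rpow_mul_sub_rpow_le_head (ha : a < 1) (hc : -1 < c) (hc0 : c ≤ 0) {s : ℝ}
    (hs : 0 ≤ s) (hsr : s < r) :
    ∫ q in 0..s, q ^ (-a) * (r - q) ^ c ≤ (r - s) ^ c * (s ^ (1 - a) / (1 - a)) := by
  calc ∫ q in 0..s, q ^ (-a) * (r - q) ^ c
      ≤ ∫ q in 0..s, q ^ (-a) * (r - s) ^ c := by
        refine integral_mono_on hs
          (intervalIntegrable_rpow_mul_sub_rpow ha hc le_rfl hs hsr.le)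
          ((intervalIntegrable_rpow' (by linarith)).mul_const _) fun q hq => ?_
        exact mul_le_mul_of_nonneg_left
          (Real.rpow_le_rpow_of_nonpos (by linarith) (by linarith [hq.2]) hc0)
          (Real.rpow_nonneg hq.1 _)
    _ = (r - s) ^ c * (s ^ (1 - a) / (1 - a)) := by
        rw [intervalIntegral.integral_mul_const, integral_rpow (Or.inl (by linarith)),
          Real.zero_rpow (by linarith), sub_zero, mul_comm, neg_add_eq_sub]

lemma integral_rpow_mul_sub_rpow_le_tail (ha : a < 1) (ha0 : 0 ≤ a) (hc : -1 < c) {s : ℝ}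
    (hs : 0 < s) (hsr : s ≤ r) :
    ∫ q in s..r, q ^ (-a) * (r - q) ^ c ≤ s ^ (-a) * ((r - s) ^ (c + 1) / (c + 1)) := by
  calc ∫ q in s..r, q ^ (-a) * (r - q) ^ c
      ≤ ∫ q in s..r, s ^ (-a) * (r - q) ^ c := by
        refine integral_mono_on hsr
          (intervalIntegrable_rpow_mul_sub_rpow ha hc hs.le hsr le_rfl)
          ((intervalIntegrable_sub_rpow hc r s).const_mul _) fun q hq => ?_
        exact mul_le_mul_of_nonneg_right
          (Real.rpow_le_rpow_of_nonpos hs hq.1 (by linarith))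
          (Real.rpow_nonneg (by linarith [hq.2]) _)
    _ = s ^ (-a) * ((r - s) ^ (c + 1) / (c + 1)) := by
        rw [intervalIntegral.integral_const_mul, integral_sub_rpow hc, sub_self,
          Real.zero_rpow (by linarith), sub_zero]

lemma integral_rpow_mul_sub_rpow_le (ha : a < 1) (ha0 : 0 ≤ a) (hc : -1 < c) (hc0 : c ≤ 0)
    (hr : 0 < r) :
    ∫ q in 0..r, q ^ (-a) * (r - q) ^ c
      ≤ (1 / (1 - a) + 1 / (c + 1)) * (r / 2) ^ (1 - a + c) := by
  have hr2 : 0 < r / 2 := by linarith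
  rw [← integral_add_adjacent_intervals
    (intervalIntegrable_rpow_mul_sub_rpow ha hc le_rfl hr2.le (by linarith))
    (intervalIntegrable_rpow_mul_sub_rpow ha hc hr2.le (by linarith) le_rfl)]
  refine (add_le_add (integral_rpow_mul_sub_rpow_le_head ha hc hc0 hr2.le (by linarith))
    (integral_rpow_mul_sub_rpow_le_tail ha ha0 hc hr2 (by linarith))).trans_eq ?_
  rw [show r - r / 2 = r / 2 by ring, Real.rpow_add hr2, Real.rpow_add hr2, Real.rpow_sub hr2,
    Real.rpow_neg hr2.le, Real.rpow_one]
  field_simp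

end Kernel

lemma abs_rpow_le_of_abs_le_mul_rpow {x A r a p : ℝ} (hA : 0 ≤ A) (hr : 0 ≤ r) (hp : 0 ≤ p)
    (hx : |x| ≤ A * r ^ (-a)) : |x| ^ p ≤ A ^ p * r ^ (-(p * a)) := by
  calc |x| ^ p ≤ (A * r ^ (-a)) ^ p := Real.rpow_le_rpow (abs_nonneg x) hx hp
    _ = A ^ p * r ^ (-(p * a)) := by
      rw [Real.mul_rpow hA (Real.rpow_nonneg hr _), ← Real.rpow_mul hr]
      ring_nf

lemma integral_abs_rpow_le_of_split {f : ℝ → ℝ} {s t p a b A B : ℝ} (hs : 0 ≤ s) (hst : s ≤ t)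
    (hp : 0 ≤ p) (hpa : p * a < 1) (hpb : p * b < 1) (hA : 0 ≤ A) (hB : 0 ≤ B)
    (hnear : ∀ r ∈ Ioc 0 s, |f r| ≤ A * r ^ (-a)) (hfar : ∀ r ∈ Ioc s t, |f r| ≤ B * r ^ (-b)) :
    ∫ r in 0..t, |f r| ^ p
      ≤ A ^ p * (s ^ (1 - p * a) / (1 - p * a)) + B ^ p * (t ^ (1 - p * b) / (1 - p * b)) := by
  set G : ℝ → ℝ := fun r => if r ≤ s then A ^ p * r ^ (-(p * a)) else B ^ p * r ^ (-(p * b))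
  have hnear' : EqOn G (fun r => A ^ p * r ^ (-(p * a))) (Ioc 0 s) := fun r hr => if_pos hr.2
  have hfar' : EqOn G (fun r => B ^ p * r ^ (-(p * b))) (Ioc s t) :=
    fun r hr => if_neg (not_le.mpr hr.1)
  have hGnear : IntervalIntegrable G volume 0 s :=
    ((intervalIntegrable_rpow' (r := -(p * a)) (by linarith)).const_mul _).congr
      (by rw [uIoc_of_le hs]; exact hnear'.symm)
  have hGfar : IntervalIntegrable G volume s t :=
    ((intervalIntegrable_rpow' (r := -(p * b)) (by linarith)).const_mul _).congr
      (by rw [uIoc_of_le hst]; exact hfar'.symm)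
  have hdom : ∀ r ∈ Ioc 0 t, |f r| ^ p ≤ G r := by
    intro r hr
    by_cases hrs : r ≤ s
    · rw [hnear' ⟨hr.1, hrs⟩]
      exact abs_rpow_le_of_abs_le_mul_rpow hA hr.1.le hp (hnear r ⟨hr.1, hrs⟩)
    · have hr' : r ∈ Ioc s t := ⟨not_le.mp hrs, hr.2⟩
      rw [hfar' hr']
      exact abs_rpow_le_of_abs_le_mul_rpow hB hr.1.le hp (hfar r hr')
  calc ∫ r in 0..t, |f r| ^ p ≤ ∫ r in 0..t, G r := by
        rw [integral_of_le (hs.trans hst), integral_of_le (hs.trans hst)]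
        refine integral_mono_of_nonneg (ae_of_all _ fun r => by positivity)
          ((intervalIntegrable_iff_integrableOn_Ioc_of_le (hs.trans hst)).mp
            (hGnear.trans hGfar)) ?_
        exact (ae_restrict_iff' measurableSet_Ioc).mpr (ae_of_all _ hdom)
    _ = A ^ p * (∫ r in 0..s, r ^ (-(p * a))) + B ^ p * ∫ r in s..t, r ^ (-(p * b)) := by
        rw [← integral_add_adjacent_intervals hGnear hGfar,
          ← intervalIntegral.integral_const_mul, ← intervalIntegral.integral_const_mul]
        congr 1 <;> refine intervalIntegral.integral_congr_ae (ae_of_all _ fun r hr => ?_)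
        · rw [uIoc_of_le hs] at hr
          exact hnear' hr
        · rw [uIoc_of_le hst] at hr
          exact hfar' hr
    _ ≤ A ^ p * (s ^ (1 - p * a) / (1 - p * a))
          + B ^ p * (t ^ (1 - p * b) / (1 - p * b)) := by
        rw [integral_rpow (r := -(p * a)) (Or.inl (by linarith)),
          integral_rpow (r := -(p * b)) (Or.inl (by linarith)),
          Real.zero_rpow (by linarith), sub_zero, neg_add_eq_sub, neg_add_eq_sub]
        gcongr
        exact sub_le_self _ (Real.rpow_nonneg hs _)

lemma tendsto_integral_abs_rpow_of_bounds {F : ℝ → ℝ → ℝ} {t p a b δ A B : ℝ}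
    (ht : 0 < t) (hp : 0 < p) (hpa : p * a < 1) (hpb : p * b < 1) (hδ : 0 < δ)
    (hnear : ∀ ε > 0, ∀ r ∈ Ioc 0 t, r ≤ 2 * ε → |F ε r| ≤ A * r ^ (-a))
    (hfar : ∀ ε > 0, ∀ r ∈ Ioc 0 t, 2 * ε < r → |F ε r| ≤ B * ε ^ δ * r ^ (-b)) :
    Tendsto (fun ε => ∫ r in 0..t, |F ε r| ^ p) (𝓝[>] 0) (𝓝 0) := by
  -- The bounds at `r = t` force `A` and `B` to be nonnegative.
  have hA : 0 ≤ A := nonneg_of_mul_nonneg_left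
    ((abs_nonneg _).trans (hnear (t / 2) (by positivity) t ⟨ht, le_rfl⟩ (by linarith)))
    (Real.rpow_pos_of_pos ht _)
  have hB : 0 ≤ B := nonneg_of_mul_nonneg_left (nonneg_of_mul_nonneg_left
    ((abs_nonneg _).trans (hfar (t / 4) (by positivity) t ⟨ht, le_rfl⟩ (by linarith)))
    (Real.rpow_pos_of_pos ht _)) (Real.rpow_pos_of_pos (by positivity) _)
  set bound : ℝ → ℝ := fun ε =>
    A ^ p * ((2 * ε) ^ (1 - p * a) / (1 - p * a))
      + (B * ε ^ δ) ^ p * (t ^ (1 - p * b) / (1 - p * b))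
  have hle : ∀ ε ∈ Ioo 0 (t / 2), ∫ r in 0..t, |F ε r| ^ p ≤ bound ε := fun ε hε =>
    integral_abs_rpow_le_of_split (by linarith [hε.1]) (by linarith [hε.2]) hp.le hpa hpb hA
      (mul_nonneg hB (Real.rpow_nonneg hε.1.le _))
      (fun r hr => hnear ε hε.1 r ⟨hr.1, by linarith [hr.2, hε.2]⟩ hr.2)
      (fun r hr => hfar ε hε.1 r ⟨by linarith [hr.1, hε.1], hr.2⟩ hr.1)
  have hbound : Tendsto bound (𝓝[>] 0) (𝓝 0) := by
    have hcont : Continuous bound := by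
      fun_prop (disch := first | positivity | linarith)
    simpa [bound, Real.zero_rpow (by linarith : 1 - p * a ≠ 0), Real.zero_rpow hδ.ne',
      Real.zero_rpow hp.ne'] using hcont.continuousWithinAt.tendsto (s := Ioi 0) (x := 0)
  refine squeeze_zero' (Eventually.of_forall fun ε => ?_)
    (eventually_of_mem (Ioo_mem_nhdsGT (by linarith)) hle) hbound
  exact integral_nonneg ht.le fun r _ => by positivity

/-- `u ∈ C^{β,∼}([0,t];E)` with weighted Hölder constant `M`. -/
def WeightedHolderOn {E : Type*} [SeminormedAddCommGroup E] (M β t : ℝ) (u : ℝ → E) : Prop :=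
  ∀ q r : ℝ, 0 < q → q ≤ r → r ≤ t → ‖u r - u q‖ ≤ M * q ^ (-β) * (r - q) ^ β

lemma WeightedHolderOn.comp_lipschitzWith {E F : Type*} [SeminormedAddCommGroup E]
    [SeminormedAddCommGroup F] {M β t : ℝ} {u : ℝ → E} {g : E → F} {L : NNReal}
    (hu : WeightedHolderOn M β t u) (hg : LipschitzWith L g) :
    WeightedHolderOn (L * M) β t (g ∘ u) := fun q r hq hqr hrt =>
  calc ‖g (u r) - g (u q)‖ ≤ L * ‖u r - u q‖ := hg.norm_sub_le _ _
    _ ≤ L * (M * q ^ (-β) * (r - q) ^ β) := by gcongr; exact hu q r hq hqr hrt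
    _ = L * M * q ^ (-β) * (r - q) ^ β := by ring

section HolderIntegrand

variable {f : ℝ → ℝ} {t α β K r : ℝ}

lemma abs_sub_div_rpow_le (hK0 : 0 ≤ K) (hK : WeightedHolderOn K β t f) {q : ℝ}
    (hq : 0 < q) (hqr : q ≤ r) (hrt : r ≤ t) :
    |(f r - f q) / (r - q) ^ (1 + α)| ≤ K * (q ^ (-β) * (r - q) ^ (β - 1 - α)) := by
  rcases hqr.eq_or_lt with rfl | hqr
  · simp only [sub_self, zero_div, abs_zero]
    exact mul_nonneg hK0 (mul_nonneg (Real.rpow_nonneg hq.le _) (Real.rpow_nonneg le_rfl _))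
  have hd : 0 < r - q := sub_pos.mpr hqr
  rw [abs_div, abs_of_pos (Real.rpow_pos_of_pos hd _), div_le_iff₀ (Real.rpow_pos_of_pos hd _)]
  calc |f r - f q| ≤ K * q ^ (-β) * (r - q) ^ β := hK q r hq hqr.le hrt
    _ = K * (q ^ (-β) * (r - q) ^ (β - 1 - α)) * (r - q) ^ (1 + α) := by
      rw [mul_assoc, mul_assoc, mul_assoc, ← Real.rpow_add hd]
      ring_nf

lemma intervalIntegrable_sub_div_rpow (hαβ : α < β) (hβ1 : β < 1) (hK0 : 0 ≤ K)
    (hK : WeightedHolderOn K β t f) (hcont : ContinuousOn f (Icc 0 t)) (hrt : r ≤ t)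
    {x y : ℝ} (hx : 0 ≤ x) (hxy : x ≤ y) (hyr : y ≤ r) :
    IntervalIntegrable (fun q => (f r - f q) / (r - q) ^ (1 + α)) volume x y := by
  refine ((intervalIntegrable_rpow_mul_sub_rpow (c := β - 1 - α) hβ1 (by linarith) hx hxy
    hyr).const_mul K).mono_fun' ?_ ?_
  · have hf : AEMeasurable f (volume.restrict (uIoc x y)) :=
      (hcont.mono fun q hq => by
        rw [uIoc_of_le hxy] at hq
        exact ⟨by linarith [hq.1], by linarith [hq.2]⟩).aemeasurable measurableSet_uIoc
    exact ((aemeasurable_const.sub hf).div (by fun_prop)).aestronglyMeasurable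
  · refine (ae_restrict_iff' measurableSet_uIoc).mpr (ae_of_all _ fun q hq => ?_)
    rw [uIoc_of_le hxy] at hq
    exact abs_sub_div_rpow_le hK0 hK (hx.trans_lt hq.1) (hq.2.trans hyr) hrt

lemma abs_integral_sub_div_rpow_le (hαβ : α < β) (hβ1 : β < 1) (hK0 : 0 ≤ K)
    (hK : WeightedHolderOn K β t f) (hrt : r ≤ t) {x y : ℝ} (hx : 0 ≤ x) (hxy : x ≤ y)
    (hyr : y ≤ r) :
    |∫ q in x..y, (f r - f q) / (r - q) ^ (1 + α)|
      ≤ K * ∫ q in x..y, q ^ (-β) * (r - q) ^ (β - 1 - α) := by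
  rw [← Real.norm_eq_abs, ← intervalIntegral.integral_const_mul]
  refine norm_integral_le_of_norm_le hxy (ae_of_all _ fun q hq => ?_)
    ((intervalIntegrable_rpow_mul_sub_rpow (c := β - 1 - α) hβ1 (by linarith) hx hxy
      hyr).const_mul K)
  exact abs_sub_div_rpow_le hK0 hK (hx.trans_lt hq.1) (hq.2.trans hyr) hrt

lemma abs_integral_zero_sub_div_rpow_le (hα0 : 0 < α) (hαβ : α < β) (hβ1 : β < 1)
    (hK0 : 0 ≤ K) (hK : WeightedHolderOn K β t f) (hr : 0 < r) (hrt : r ≤ t) {y : ℝ}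
    (hy : 0 ≤ y) (hyr : y ≤ r) :
    |∫ q in 0..y, (f r - f q) / (r - q) ^ (1 + α)|
      ≤ K * (2 ^ α * (1 / (1 - β) + 1 / (β - α))) * r ^ (-α) := by
  have hkernel := integral_rpow_mul_sub_rpow_le (c := β - 1 - α) hβ1 (by linarith) (by linarith)
    (by linarith) hr
  rw [show 1 - β + (β - 1 - α) = -α by ring, show β - 1 - α + 1 = β - α by ring,
    half_rpow_neg hr.le] at hkernel
  calc |∫ q in 0..y, (f r - f q) / (r - q) ^ (1 + α)|
      ≤ K * ∫ q in 0..y, q ^ (-β) * (r - q) ^ (β - 1 - α) :=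
        abs_integral_sub_div_rpow_le hαβ hβ1 hK0 hK hrt le_rfl hy hyr
    _ ≤ K * ∫ q in 0..r, q ^ (-β) * (r - q) ^ (β - 1 - α) := by
        gcongr
        refine integral_mono_interval le_rfl hy hyr
          ((ae_restrict_iff' measurableSet_Ioc).mpr (ae_of_all _ fun q hq => ?_))
          (intervalIntegrable_rpow_mul_sub_rpow hβ1 (by linarith) le_rfl hr.le le_rfl)
        exact mul_nonneg (Real.rpow_nonneg hq.1.le _) (Real.rpow_nonneg (by linarith [hq.2]) _)
    _ ≤ K * (2 ^ α * (1 / (1 - β) + 1 / (β - α))) * r ^ (-α) := by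
        rw [mul_assoc]
        gcongr
        linarith

end HolderIntegrand

section Psi

variable {V : Type*} [NormedAddCommGroup V] {g : V → ℝ} {u : ℝ → V} {t α β K ε r : ℝ}

lemma abs_psiEps_le_of_le (hα0 : 0 < α) {C : ℝ} (hC : |g (u r)| ≤ C) (hr : 0 < r)
    (hrε : r ≤ ε) : |psiEps α g u ε r| ≤ C / α * r ^ (-α) := by
  have hpow : ε ^ (-α) ≤ r ^ (-α) := Real.rpow_le_rpow_of_nonpos hr hrε (by linarith)
  rw [psiEps, if_neg hrε.not_gt, abs_mul, abs_div, abs_of_pos hα0, abs_sub_comm,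
    abs_of_nonneg (sub_nonneg.mpr hpow)]
  exact mul_le_mul (by gcongr) (sub_le_self _ (Real.rpow_nonneg (hr.le.trans hrε) _))
    (sub_nonneg.mpr hpow) (div_nonneg ((abs_nonneg _).trans hC) hα0.le)

lemma abs_psiEps_sub_psiZero_le (hα0 : 0 < α) (hαβ : α < β) (hβ1 : β < 1) (hK0 : 0 ≤ K)
    (hK : WeightedHolderOn K β t (g ∘ u)) {C : ℝ} (hC : |g (u r)| ≤ C) (hε : 0 ≤ ε)
    (hr : 0 < r) (hrt : r ≤ t) :
    |psiEps α g u ε r - psiZero α g u r|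
      ≤ (C / α + 2 * (K * (2 ^ α * (1 / (1 - β) + 1 / (β - α))))) * r ^ (-α) := by
  have hZero : |psiZero α g u r| ≤ K * (2 ^ α * (1 / (1 - β) + 1 / (β - α))) * r ^ (-α) :=
    abs_integral_zero_sub_div_rpow_le (f := g ∘ u) hα0 hαβ hβ1 hK0 hK hr hrt hr.le le_rfl
  have hC0 : 0 ≤ C / α * r ^ (-α) := by
    have := (abs_nonneg _).trans hC
    positivity
  have htri := abs_sub (psiEps α g u ε r) (psiZero α g u r)
  rcases lt_or_ge ε r with hεr | hrε
  · have hEps :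
        |psiEps α g u ε r| ≤ K * (2 ^ α * (1 / (1 - β) + 1 / (β - α))) * r ^ (-α) := by
      rw [psiEps, if_pos hεr]
      exact abs_integral_zero_sub_div_rpow_le (f := g ∘ u) hα0 hαβ hβ1 hK0 hK hr hrt
        (by linarith) (by linarith)
    linarith
  · have hEps := abs_psiEps_le_of_le hα0 hC hr hrε
    linarith [abs_nonneg (psiZero α g u r)]

lemma abs_psiEps_sub_psiZero_le_of_two_mul_lt (hα0 : 0 < α) (hαβ : α < β) (hβ1 : β < 1)
    (hK0 : 0 ≤ K) (hK : WeightedHolderOn K β t (g ∘ u))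
    (hcont : ContinuousOn (g ∘ u) (Icc 0 t)) (hε : 0 ≤ ε) (h2ε : 2 * ε < r) (hrt : r ≤ t) :
    |psiEps α g u ε r - psiZero α g u r| ≤ K * 2 ^ β / (β - α) * ε ^ (β - α) * r ^ (-β) := by
  have hint : ∀ {y}, 0 ≤ y → y ≤ r →
      IntervalIntegrable (fun q => (g (u r) - g (u q)) / (r - q) ^ (1 + α)) volume 0 y :=
    fun hy hyr =>
      intervalIntegrable_sub_div_rpow (f := g ∘ u) hαβ hβ1 hK0 hK hcont hrt le_rfl hy hyr
  have htail := integral_rpow_mul_sub_rpow_le_tail (c := β - 1 - α) (r := r) hβ1 (by linarith)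
    (by linarith) (s := r - ε) (by linarith) (by linarith)
  rw [show r - (r - ε) = ε by ring, show β - 1 - α + 1 = β - α by ring] at htail
  rw [psiEps, if_pos (by linarith), psiZero,
    integral_interval_sub_left (hint (by linarith) (by linarith)) (hint (by linarith) le_rfl),
    integral_symm, abs_neg]
  calc |∫ q in (r - ε)..r, (g (u r) - g (u q)) / (r - q) ^ (1 + α)|
      ≤ K * ∫ q in (r - ε)..r, q ^ (-β) * (r - q) ^ (β - 1 - α) :=
        abs_integral_sub_div_rpow_le (f := g ∘ u) hαβ hβ1 hK0 hK hrt (by linarith)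
          (by linarith) le_rfl
    _ ≤ K * ((r / 2) ^ (-β) * (ε ^ (β - α) / (β - α))) := by
        refine mul_le_mul_of_nonneg_left
          (htail.trans (mul_le_mul_of_nonneg_right ?_ ?_)) hK0
        · exact Real.rpow_le_rpow_of_nonpos (by linarith) (by linarith) (by linarith)
        · exact div_nonneg (Real.rpow_nonneg hε _) (by linarith)
    _ = K * 2 ^ β / (β - α) * ε ^ (β - α) * r ^ (-β) := by
        rw [half_rpow_neg (by linarith)]
        ring

end Psi

theorem psiEps_tendsto_Lp_general {V : Type*} [NormedAddCommGroup V]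
    {t α β p : ℝ} (ht : 0 < t) (hα0 : 0 < α) (hαβ : α < β) (hβ1 : β < 1)
    (hp : 1 < p) (hpβ : p * β < 1)
    (u : ℝ → V) (M : ℝ) (hM : 0 ≤ M) (hu : ContinuousOn u (Icc 0 t))
    (hhol : ∀ q r : ℝ, 0 < q → q ≤ r → r ≤ t →
      ‖u r - u q‖ ≤ M * q ^ (-β) * (r - q) ^ β)
    (g : V → ℝ) (L : NNReal) (hg : LipschitzWith L g) :
    Filter.Tendsto
      (fun ε : ℝ => ∫ r in (0:ℝ)..t, |psiEps α g u ε r - psiZero α g u r| ^ p)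
      (nhdsWithin 0 (Ioi 0)) (nhds 0) := by
  have hcont : ContinuousOn (g ∘ u) (Icc 0 t) := hg.continuous.comp_continuousOn hu
  obtain ⟨C, hC⟩ := isCompact_Icc.exists_bound_of_continuousOn hcont
  have hK : WeightedHolderOn (L * M) β t (g ∘ u) := WeightedHolderOn.comp_lipschitzWith hhol hg
  have hK0 : 0 ≤ (L : ℝ) * M := mul_nonneg L.coe_nonneg hM
  have hp0 : 0 < p := by linarith
  exact tendsto_integral_abs_rpow_of_bounds ht hp0
    ((mul_lt_mul_of_pos_left hαβ hp0).trans hpβ) hpβ (sub_pos.mpr hαβ)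
    (fun ε hε r hr _ => abs_psiEps_sub_psiZero_le hα0 hαβ hβ1 hK0 hK
      (hC r (Ioc_subset_Icc_self hr)) hε.le hr.1 hr.2)
    (fun ε hε r hr h2ε => abs_psiEps_sub_psiZero_le_of_two_mul_lt hα0 hαβ hβ1 hK0 hK hcont hε.le
      h2ε hr.2)

/-- If `u ∈ C^{β,∼}([0,t];V)` (weighted Hölder constant `M`), `g` is Lipschitz,
`0 < α < β < 1` and `p > 1` satisfies `pβ < 1`, `p(1+α−β) < 1` and `p(1+α) < 2`,
then `ψ_ε → ψ₀` in `L_p((0,t);ℝ)` as `ε → 0⁺`. -/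
theorem psiEps_tendsto_Lp {V : Type*} [NormedAddCommGroup V]
    {t α β p : ℝ} (ht : 0 < t) (hα0 : 0 < α) (hαβ : α < β) (hβ1 : β < 1)
    (hp : 1 < p) (hpβ : p * β < 1) (hpαβ : p * (1 + α - β) < 1)
    (hpα : p * (1 + α) < 2)
    (u : ℝ → V) (M : ℝ) (hM : 0 ≤ M) (hu : ContinuousOn u (Icc 0 t))
    (hhol : ∀ q r : ℝ, 0 < q → q ≤ r → r ≤ t →
      ‖u r - u q‖ ≤ M * q ^ (-β) * (r - q) ^ β)
    (g : V → ℝ) (L : NNReal) (hg : LipschitzWith L g) :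
    Filter.Tendsto
      (fun ε : ℝ => ∫ r in (0:ℝ)..t, |psiEps α g u ε r - psiZero α g u r| ^ p)
      (nhdsWithin 0 (Ioi 0)) (nhds 0) :=
  psiEps_tendsto_Lp_general ht hα0 hαβ hβ1 hp hpβ u M hM hu hhol g L hg
end

section
/- Let a > −1, b > −1, a + b ≥ −1, d > 0 and T > 0. For ρ > 0 define K(ρ) = sup_{t∈[0,T]} t^d ∫_0^1 e^{−ρ t (1−v)} v^a (1−v)^b dv. Then the integrals are finite and lim_{ρ→∞} K(ρ) = 0. -/
/-!
Since `t ^ d * exp (-s * t) ≤ (d / s) ^ d`, for `0 ≤ t ≤ T` and `v < 1` the integrand of `K(ρ)`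
is bounded, uniformly in `t`, by `min (T ^ d) ((d / (ρ * (1 - v))) ^ d) * v ^ a * (1 - v) ^ b`.
So `K(ρ)` is at most the integral of this majorant, which tends to `0` as `ρ → ∞` by dominated
convergence, with dominating function `T ^ d * v ^ a * (1 - v) ^ b`.
-/

open Set MeasureTheory

/-- `K(ρ) = sup_{t∈[0,T]} t^d ∫_0^1 e^{−ρt(1−v)} v^a (1−v)^b dv`. -/
noncomputable def Kfun (a b d T ρ : ℝ) : ℝ :=
  ⨆ t : Icc (0:ℝ) T,
    (t : ℝ) ^ d * ∫ v in (0:ℝ)..1, Real.exp (-ρ * (t : ℝ) * (1 - v)) * v ^ a * (1 - v) ^ b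

open Filter Topology
open scoped Interval

lemma rpow_mul_exp_neg_mul_le {s t d : ℝ} (hs : 0 < s) (ht : 0 ≤ t) (hd : 0 < d) :
    t ^ d * Real.exp (-s * t) ≤ (d / s) ^ d := by
  set y := s * t / d with hy_def
  have hy : y * Real.exp (-y) ≤ 1 := by
    rw [Real.exp_neg, ← div_eq_mul_inv, div_le_one (Real.exp_pos y)]
    linarith [Real.add_one_le_exp y]
  calc t ^ d * Real.exp (-s * t) = t ^ d * Real.exp (-y) ^ d := by
        rw [← Real.exp_mul]; congr 2; rw [hy_def]; field_simp
    _ = (d / s * (y * Real.exp (-y))) ^ d := by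
        rw [← Real.mul_rpow ht (Real.exp_pos _).le]; congr 1; rw [hy_def]; field_simp
    _ ≤ (d / s * 1) ^ d := by gcongr
    _ = (d / s) ^ d := by rw [mul_one]

lemma rpow_mul_one_sub_rpow_nonneg {a b v : ℝ} (hv₀ : 0 ≤ v) (hv₁ : v ≤ 1) :
    0 ≤ v ^ a * (1 - v) ^ b :=
  mul_nonneg (Real.rpow_nonneg hv₀ a) (Real.rpow_nonneg (sub_nonneg.mpr hv₁) b)

lemma intervalIntegrable_rpow_mul_one_sub_rpow_zero_half {a : ℝ} (ha : -1 < a) (b : ℝ) :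
    IntervalIntegrable (fun v : ℝ => v ^ a * (1 - v) ^ b) volume 0 (1 / 2) := by
  refine (intervalIntegral.intervalIntegrable_rpow' ha).mul_continuousOn
    (ContinuousOn.rpow_const (by fun_prop) fun v hv => Or.inl ?_)
  rw [uIcc_of_le (by norm_num)] at hv
  linarith [hv.2]

lemma intervalIntegrable_rpow_mul_one_sub_rpow {a b : ℝ} (ha : -1 < a) (hb : -1 < b) :
    IntervalIntegrable (fun v : ℝ => v ^ a * (1 - v) ^ b) volume 0 1 := by
  have hright := (intervalIntegrable_rpow_mul_one_sub_rpow_zero_half hb a).comp_sub_left 1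
  norm_num at hright
  refine (intervalIntegrable_rpow_mul_one_sub_rpow_zero_half ha b).trans ?_
  simpa only [mul_comm] using hright.symm

lemma intervalIntegrable_exp_mul_rpow_mul_one_sub_rpow {a b : ℝ} (ha : -1 < a) (hb : -1 < b)
    (c : ℝ) :
    IntervalIntegrable (fun v => Real.exp (c * (1 - v)) * v ^ a * (1 - v) ^ b) volume 0 1 := by
  simpa only [mul_assoc] using
    (intervalIntegrable_rpow_mul_one_sub_rpow ha hb).continuousOn_mul
      (g := fun v => Real.exp (c * (1 - v))) (by fun_prop)

-- At `v = 1` the second argument of `min` is the junk value `(d / 0) ^ d = 0`, so the majorant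
-- only bounds the integrand on `Ioo 0 1`.
noncomputable def Kmajorant (a b d T ρ v : ℝ) : ℝ :=
  min (T ^ d) ((d / (ρ * (1 - v))) ^ d) * (v ^ a * (1 - v) ^ b)

section Kmajorant

variable {a b d T ρ : ℝ}

lemma rpow_mul_exp_le_min {t w : ℝ} (hd : 0 < d) (hρ : 0 < ρ) (ht : t ∈ Icc 0 T) (hw : 0 < w) :
    t ^ d * Real.exp (-ρ * t * w) ≤ min (T ^ d) ((d / (ρ * w)) ^ d) := by
  refine le_min ?_ ?_
  · calc t ^ d * Real.exp (-ρ * t * w) ≤ t ^ d * 1 := by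
          gcongr
          · exact Real.rpow_nonneg ht.1 d
          · exact Real.exp_le_one_iff.mpr
              (by linarith [mul_nonneg (mul_nonneg hρ.le ht.1) hw.le])
      _ ≤ T ^ d := by rw [mul_one]; exact Real.rpow_le_rpow ht.1 ht.2 hd.le
  · calc t ^ d * Real.exp (-ρ * t * w) = t ^ d * Real.exp (-(ρ * w) * t) := by ring_nf
      _ ≤ (d / (ρ * w)) ^ d := rpow_mul_exp_neg_mul_le (mul_pos hρ hw) ht.1 hd

lemma measurable_Kmajorant : Measurable (Kmajorant a b d T ρ) := by
  unfold Kmajorant; fun_prop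

lemma Kmajorant_nonneg (hd : 0 < d) (hT : 0 ≤ T) (hρ : 0 < ρ) {v : ℝ} (hv : v ∈ Icc 0 1) :
    0 ≤ Kmajorant a b d T ρ v := by
  have h1v : 0 ≤ 1 - v := by linarith [hv.2]
  exact mul_nonneg (le_min (Real.rpow_nonneg hT d)
    (Real.rpow_nonneg (div_nonneg hd.le (mul_nonneg hρ.le h1v)) d))
    (rpow_mul_one_sub_rpow_nonneg hv.1 hv.2)

lemma Kmajorant_le {v : ℝ} (hv : v ∈ Icc 0 1) :
    Kmajorant a b d T ρ v ≤ T ^ d * (v ^ a * (1 - v) ^ b) :=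
  mul_le_mul_of_nonneg_right (min_le_left _ _) (rpow_mul_one_sub_rpow_nonneg hv.1 hv.2)

lemma norm_Kmajorant_le_ae (hd : 0 < d) (hT : 0 ≤ T) (hρ : 0 < ρ) :
    ∀ᵐ v ∂volume, v ∈ Ι (0:ℝ) 1 → ‖Kmajorant a b d T ρ v‖ ≤ T ^ d * (v ^ a * (1 - v) ^ b) := by
  refine ae_of_all _ fun v hv => ?_
  rw [uIoc_of_le zero_le_one] at hv
  have hv' : v ∈ Icc 0 1 := Ioc_subset_Icc_self hv
  rw [Real.norm_of_nonneg (Kmajorant_nonneg hd hT hρ hv')]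
  exact Kmajorant_le hv'

lemma intervalIntegrable_Kmajorant (ha : -1 < a) (hb : -1 < b) (hd : 0 < d) (hT : 0 ≤ T)
    (hρ : 0 < ρ) : IntervalIntegrable (Kmajorant a b d T ρ) volume 0 1 :=
  ((intervalIntegrable_rpow_mul_one_sub_rpow ha hb).const_mul _).mono_fun'
    measurable_Kmajorant.aestronglyMeasurable
    ((ae_restrict_iff' measurableSet_uIoc).mpr (norm_Kmajorant_le_ae hd hT hρ))

lemma tendsto_Kmajorant (hd : 0 < d) (hT : 0 ≤ T) {v : ℝ} (hv : v < 1) :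
    Tendsto (fun ρ => Kmajorant a b d T ρ v) atTop (𝓝 0) := by
  have hbase : Tendsto (fun ρ => d / (ρ * (1 - v))) atTop (𝓝 0) :=
    tendsto_const_nhds.div_atTop (tendsto_id.atTop_mul_const (by linarith))
  have hpow := hbase.rpow_const (Or.inr hd.le)
  rw [Real.zero_rpow hd.ne'] at hpow
  have hmin := (tendsto_const_nhds (x := T ^ d)).min hpow
  rw [min_eq_right (Real.rpow_nonneg hT d)] at hmin
  simpa only [Kmajorant, zero_mul] using hmin.mul_const (v ^ a * (1 - v) ^ b)

lemma tendsto_integral_Kmajorant (ha : -1 < a) (hb : -1 < b) (hd : 0 < d) (hT : 0 ≤ T) :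
    Tendsto (fun ρ => ∫ v in (0:ℝ)..1, Kmajorant a b d T ρ v) atTop (𝓝 0) := by
  have h := intervalIntegral.tendsto_integral_filter_of_dominated_convergence (f := fun _ => 0)
    (a := 0) (b := 1) (μ := volume) (l := atTop) (F := fun ρ => Kmajorant a b d T ρ) _
    (Eventually.of_forall fun _ => measurable_Kmajorant.aestronglyMeasurable)
    ((eventually_gt_atTop 0).mono fun ρ hρ => norm_Kmajorant_le_ae hd hT hρ)
    ((intervalIntegrable_rpow_mul_one_sub_rpow ha hb).const_mul _) ?_
  · simpa using h
  · filter_upwards [Measure.ae_ne volume 1] with v hv1 hv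
    rw [uIoc_of_le zero_le_one] at hv
    exact tendsto_Kmajorant hd hT (lt_of_le_of_ne hv.2 hv1)

lemma mul_integral_le_integral_Kmajorant (ha : -1 < a) (hb : -1 < b) (hd : 0 < d) (hρ : 0 < ρ)
    {t : ℝ} (ht : t ∈ Icc 0 T) :
    t ^ d * ∫ v in (0:ℝ)..1, Real.exp (-ρ * t * (1 - v)) * v ^ a * (1 - v) ^ b
      ≤ ∫ v in (0:ℝ)..1, Kmajorant a b d T ρ v := by
  rw [← intervalIntegral.integral_const_mul]
  refine intervalIntegral.integral_mono_on_of_le_Ioo zero_le_one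
    ((intervalIntegrable_exp_mul_rpow_mul_one_sub_rpow ha hb _).const_mul _)
    (intervalIntegrable_Kmajorant ha hb hd (ht.1.trans ht.2) hρ) fun v hv => ?_
  calc t ^ d * (Real.exp (-ρ * t * (1 - v)) * v ^ a * (1 - v) ^ b)
      = t ^ d * Real.exp (-ρ * t * (1 - v)) * (v ^ a * (1 - v) ^ b) := by ring
    _ ≤ Kmajorant a b d T ρ v :=
      mul_le_mul_of_nonneg_right (rpow_mul_exp_le_min hd hρ ht (by linarith [hv.2]))
        (rpow_mul_one_sub_rpow_nonneg hv.1.le hv.2.le)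

lemma Kfun_le_integral_Kmajorant (ha : -1 < a) (hb : -1 < b) (hd : 0 < d) (hT : 0 ≤ T)
    (hρ : 0 < ρ) : Kfun a b d T ρ ≤ ∫ v in (0:ℝ)..1, Kmajorant a b d T ρ v :=
  Real.iSup_le (fun t => mul_integral_le_integral_Kmajorant ha hb hd hρ t.2)
    (intervalIntegral.integral_nonneg zero_le_one fun _ hv => Kmajorant_nonneg hd hT hρ hv)

end Kmajorant

lemma Kfun_nonneg (a b d T ρ : ℝ) : 0 ≤ Kfun a b d T ρ :=
  Real.iSup_nonneg fun t => mul_nonneg (Real.rpow_nonneg t.2.1 d) <|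
    intervalIntegral.integral_nonneg zero_le_one fun v hv => by
      rw [mul_assoc]
      exact mul_nonneg (Real.exp_pos _).le (rpow_mul_one_sub_rpow_nonneg hv.1 hv.2)

theorem Kfun_tendsto_zero_general {a b d T : ℝ} (ha : -1 < a) (hb : -1 < b)
    (hd : 0 < d) (hT : 0 < T) :
    (∀ ρ > (0:ℝ), ∀ t ∈ Icc (0:ℝ) T,
      IntervalIntegrable (fun v => Real.exp (-ρ * t * (1 - v)) * v ^ a * (1 - v) ^ b)
        volume 0 1) ∧
    Filter.Tendsto (fun ρ => Kfun a b d T ρ) Filter.atTop (nhds 0) :=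
  ⟨fun _ _ _ _ => intervalIntegrable_exp_mul_rpow_mul_one_sub_rpow ha hb _,
    tendsto_of_tendsto_of_tendsto_of_le_of_le' tendsto_const_nhds
      (tendsto_integral_Kmajorant ha hb hd hT.le) (Eventually.of_forall (Kfun_nonneg a b d T))
      ((eventually_gt_atTop 0).mono fun _ hρ => Kfun_le_integral_Kmajorant ha hb hd hT.le hρ)⟩

/-- For `a > −1`, `b > −1`, `a + b ≥ −1`, `d > 0` and `T > 0`, the integrals defining
`K(ρ)` are finite and `lim_{ρ→∞} K(ρ) = 0`. -/
theorem Kfun_tendsto_zero {a b d T : ℝ} (ha : -1 < a) (hb : -1 < b)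
    (hab : -1 ≤ a + b) (hd : 0 < d) (hT : 0 < T) :
    (∀ ρ > (0:ℝ), ∀ t ∈ Icc (0:ℝ) T,
      IntervalIntegrable (fun v => Real.exp (-ρ * t * (1 - v)) * v ^ a * (1 - v) ^ b)
        volume 0 1) ∧
    Filter.Tendsto (fun ρ => Kfun a b d T ρ) Filter.atTop (nhds 0) :=
  Kfun_tendsto_zero_general ha hb hd hT
end

section
/- Let β ≥ 0 and γ ≥ 0 with β + γ ≤ 1. Then there exists a constant c > 0, depending only on β and γ, such that for every λ ≥ 0 and all reals 0 ≤ q ≤ r < s ≤ t: |e^{−λ(t−r)} − e^{−λ(s−r)} − e^{−λ(t−q)} + e^{−λ(s−q)}| ≤ c (t−s)^β (r−q)^γ (s−r)^{−(β+γ)}. -/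
/-! With `x = λ(t-s)`, `y = λ(s-r)`, `z = λ(r-q)` the second difference factors as
`-(1 - e^{-x}) e^{-y} (1 - e^{-z})`. For exponents in `[0, 1]` one has `1 - e^{-x} ≤ x^β`
and `e^{-y} ≤ y^{-(β+γ)}`, and the powers of `λ` cancel because the exponents sum to zero;
so `c = 1` works. -/

open Real

lemma one_sub_exp_neg_le_rpow {β x : ℝ} (hβ : 0 ≤ β) (hβ1 : β ≤ 1) (hx : 0 ≤ x) :
    1 - exp (-x) ≤ x ^ β := by
  rcases hx.eq_or_lt with rfl | hx
  · simp only [neg_zero, exp_zero, sub_self]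
    positivity
  rcases le_or_gt 1 x with h1 | h1
  · calc 1 - exp (-x) ≤ 1 := by linarith [exp_pos (-x)]
      _ ≤ x ^ β := one_le_rpow h1 hβ
  · calc 1 - exp (-x) ≤ x := by linarith [add_one_le_exp (-x)]
      _ = x ^ (1 : ℝ) := (rpow_one x).symm
      _ ≤ x ^ β := rpow_le_rpow_of_exponent_ge hx h1.le hβ1

lemma rpow_le_exp {a y : ℝ} (ha : 0 ≤ a) (ha1 : a ≤ 1) (hy : 0 ≤ y) : y ^ a ≤ exp y := by
  rcases le_or_gt 1 y with h1 | h1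
  · calc y ^ a ≤ y ^ (1 : ℝ) := rpow_le_rpow_of_exponent_le h1 ha1
      _ = y := rpow_one y
      _ ≤ exp y := by linarith [add_one_le_exp y]
  · calc y ^ a ≤ 1 := rpow_le_one hy h1.le ha
      _ ≤ exp y := one_le_exp hy

lemma exp_neg_le_rpow_neg {a y : ℝ} (ha : 0 ≤ a) (ha1 : a ≤ 1) (hy : 0 < y) :
    exp (-y) ≤ y ^ (-a) := by
  rw [exp_neg, rpow_neg hy.le]
  exact inv_anti₀ (rpow_pos_of_pos hy a) (rpow_le_exp ha ha1 hy.le)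

lemma exp_second_difference_eq (lam q r s t : ℝ) :
    exp (-lam * (t - r)) - exp (-lam * (s - r)) - exp (-lam * (t - q)) + exp (-lam * (s - q)) =
      -((1 - exp (-(lam * (t - s)))) * exp (-(lam * (s - r))) *
        (1 - exp (-(lam * (r - q))))) := by
  have e₁ : -lam * (t - r) = -(lam * (t - s)) + -(lam * (s - r)) := by ring
  have e₂ : -lam * (t - q) = -(lam * (t - s)) + -(lam * (s - r)) + -(lam * (r - q)) := by ring
  have e₃ : -lam * (s - q) = -(lam * (s - r)) + -(lam * (r - q)) := by ring
  rw [e₁, e₂, e₃, neg_mul, exp_add, exp_add, exp_add, exp_add]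
  ring

lemma one_sub_exp_mul_exp_mul_one_sub_exp_le {β γ x y z : ℝ} (hβ : 0 ≤ β) (hγ : 0 ≤ γ)
    (hβγ : β + γ ≤ 1) (hx : 0 ≤ x) (hy : 0 < y) (hz : 0 ≤ z) :
    |(1 - exp (-x)) * exp (-y) * (1 - exp (-z))| ≤ x ^ β * y ^ (-(β + γ)) * z ^ γ := by
  have hx' : 0 ≤ 1 - exp (-x) := by linarith [exp_le_one_iff.mpr (neg_nonpos.mpr hx)]
  have hz' : 0 ≤ 1 - exp (-z) := by linarith [exp_le_one_iff.mpr (neg_nonpos.mpr hz)]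
  rw [abs_of_nonneg (by positivity)]
  gcongr
  · exact one_sub_exp_neg_le_rpow hβ (by linarith) hx
  · exact exp_neg_le_rpow_neg (by linarith) hβγ hy
  · exact one_sub_exp_neg_le_rpow hγ (by linarith) hz

lemma mul_rpow_mul_rpow_neg_add_mul_rpow {lam a b c : ℝ} (β γ : ℝ) (hlam : 0 < lam)
    (ha : 0 ≤ a) (hb : 0 ≤ b) (hc : 0 ≤ c) :
    (lam * a) ^ β * (lam * b) ^ (-(β + γ)) * (lam * c) ^ γ =
      a ^ β * c ^ γ * b ^ (-(β + γ)) := by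
  have hlam_pow : lam ^ β * lam ^ (-(β + γ)) * lam ^ γ = 1 := by
    rw [← rpow_add hlam, ← rpow_add hlam, show β + -(β + γ) + γ = 0 by ring, rpow_zero]
  rw [mul_rpow hlam.le ha, mul_rpow hlam.le hb, mul_rpow hlam.le hc]
  linear_combination (a ^ β * c ^ γ * b ^ (-(β + γ))) * hlam_pow

/-- Scalar version, uniform in `λ ≥ 0`, of the semigroup estimate
`|S(t−r) − S(s−r) − S(t−q) + S(s−q)| ≤ c (t−s)^β (r−q)^γ (s−r)^{−(β+γ)}`:
for `β, γ ≥ 0` with `β + γ ≤ 1` there is `c = c(β,γ) > 0` such that for all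
`λ ≥ 0` and `0 ≤ q ≤ r < s ≤ t`,
`|e^{−λ(t−r)} − e^{−λ(s−r)} − e^{−λ(t−q)} + e^{−λ(s−q)}|
  ≤ c (t−s)^β (r−q)^γ (s−r)^{−(β+γ)}`. -/
theorem exp_second_difference_bound {β γ : ℝ}
    (hβ : 0 ≤ β) (hγ : 0 ≤ γ) (hβγ : β + γ ≤ 1) :
    ∃ c > 0, ∀ lam : ℝ, 0 ≤ lam → ∀ q r s t : ℝ,
      0 ≤ q → q ≤ r → r < s → s ≤ t →
      |Real.exp (-lam * (t - r)) - Real.exp (-lam * (s - r)) -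
          Real.exp (-lam * (t - q)) + Real.exp (-lam * (s - q))| ≤
        c * (t - s) ^ β * (r - q) ^ γ * (s - r) ^ (-(β + γ)) := by
  refine ⟨1, one_pos, fun lam hlam q r s t _ hqr hrs hst => ?_⟩
  have hts : 0 ≤ t - s := by linarith
  have hsr : 0 < s - r := by linarith
  have hrq : 0 ≤ r - q := by linarith
  rcases hlam.eq_or_lt with rfl | hlam
  · simp only [neg_zero, zero_mul, exp_zero, sub_self, zero_sub, neg_add_cancel, abs_zero]
    positivity
  rw [exp_second_difference_eq, abs_neg, one_mul,
    ← mul_rpow_mul_rpow_neg_add_mul_rpow β γ hlam hts hsr.le hrq]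
  exact one_sub_exp_mul_exp_mul_one_sub_exp_le hβ hγ hβγ
    (mul_nonneg hlam.le hts) (mul_pos hlam hsr) (mul_nonneg hlam.le hrq)
end
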